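/- arXiv:2508.08263 — 8 statements merged into one kernel-verified Lean document; each statement's English description precedes it below -/
import Mathlib

section
/- Let H be a complex separable Hilbert space, K a bounded linear operator on H, (f_k)_{k∈I} a Bessel sequence in H with Bessel bound B > 0, and (g_k)_{k∈I} a Bessel sequence in H such that for every x ∈ H the family (⟨g_k, x⟩ f_k)_{k∈I} is unconditionally summable with sum Kx. Then for every x ∈ H one has B⁻¹‖Kx‖² ≤ Σ_{k∈I} |⟨g_k, x⟩|²; in particular (g_k) is a K*-frame with lower bound B⁻¹. -/
open ContinuousLinearMap

/-!
Pairing `K x = ∑ₖ ⟨g k, x⟩ f k` with `K x` writes `‖K x‖²` as `∑ₖ ⟨g k, x⟩ ⟨K x, f k⟩`. The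
weighted AM-GM inequality `2ab ≤ B a² + B⁻¹ b²`, summed over `k`, together with the Bessel bound
`∑ₖ |⟨f k, K x⟩|² ≤ B ‖K x‖²` for the second factor, gives
`2 ‖K x‖² ≤ B ∑ₖ |⟨g k, x⟩|² + ‖K x‖²`.
-/

section Series

variable {ι : Type*}

lemma summable_mul_of_summable_sq {u v : ι → ℝ} (hu : Summable fun k => u k ^ 2)
    (hv : Summable fun k => v k ^ 2) : Summable fun k => u k * v k :=
  (hu.add hv).of_norm_bounded fun k => by
    rw [Real.norm_eq_abs, abs_mul]
    nlinarith [two_mul_le_add_sq |u k| |v k|, sq_abs (u k), sq_abs (v k), abs_nonneg (u k),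
      abs_nonneg (v k)]

lemma two_mul_tsum_mul_le {u v : ι → ℝ} (hu : Summable fun k => u k ^ 2)
    (hv : Summable fun k => v k ^ 2) {t : ℝ} (ht : 0 < t) :
    2 * ∑' k, u k * v k ≤ t * ∑' k, u k ^ 2 + t⁻¹ * ∑' k, v k ^ 2 := by
  rw [← tsum_mul_left, ← tsum_mul_left, ← tsum_mul_left,
    ← (hu.mul_left t).tsum_add (hv.mul_left t⁻¹)]
  refine (summable_mul_of_summable_sq hu hv).mul_left 2 |>.tsum_le_tsum (fun k => ?_)
    ((hu.mul_left t).add (hv.mul_left t⁻¹))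
  simpa only [mul_assoc] using two_mul_le_add_mul_sq ht

end Series

section Bessel

variable {ι 𝕜 E : Type*} [RCLike 𝕜] [NormedAddCommGroup E] [InnerProductSpace 𝕜 E]

variable (𝕜) in
def IsBesselSeq (f : ι → E) (B : ℝ) : Prop :=
  ∀ x : E, Summable (fun k => ‖(inner 𝕜 (f k) x : 𝕜)‖ ^ 2) ∧
    ∑' k, ‖(inner 𝕜 (f k) x : 𝕜)‖ ^ 2 ≤ B * ‖x‖ ^ 2

lemma hasSum_mul_inner_of_hasSum_smul {f : ι → E} {c : ι → 𝕜} {y : E}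
    (hy : HasSum (fun k => c k • f k) y) :
    HasSum (fun k => c k * inner 𝕜 y (f k)) ((‖y‖ : 𝕜) ^ 2) := by
  simpa [inner_smul_right, mul_comm, inner_self_eq_norm_sq_to_K] using
    hy.mapL (innerSL 𝕜 y)

/-- The synthesis operator of a Bessel sequence with bound `B` has norm at most `√B`. -/
theorem IsBesselSeq.norm_sq_le_of_hasSum {f : ι → E} {B : ℝ} (hf : IsBesselSeq 𝕜 f B)
    (hB : 0 < B) {c : ι → 𝕜} (hc : Summable fun k => ‖c k‖ ^ 2) {y : E}
    (hy : HasSum (fun k => c k • f k) y) :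
    ‖y‖ ^ 2 ≤ B * ∑' k, ‖c k‖ ^ 2 := by
  obtain ⟨hfy, hfyB⟩ := hf y
  have hsymm (k : ι) : ‖(inner 𝕜 (f k) y : 𝕜)‖ = ‖(inner 𝕜 y (f k) : 𝕜)‖ := norm_inner_symm _ _
  simp only [hsymm] at hfy hfyB
  have hsum := hasSum_mul_inner_of_hasSum_smul hy
  have hnorm : Summable fun k => ‖c k * inner 𝕜 y (f k)‖ := by
    simpa only [norm_mul] using summable_mul_of_summable_sq hc hfy
  have hpair : ‖y‖ ^ 2 ≤ ∑' k, ‖c k‖ * ‖(inner 𝕜 y (f k) : 𝕜)‖ := by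
    simpa [hsum.tsum_eq, norm_mul] using norm_tsum_le_tsum_norm hnorm
  have hamgm := two_mul_tsum_mul_le hc hfy hB
  have hbessel : B⁻¹ * ∑' k, ‖(inner 𝕜 y (f k) : 𝕜)‖ ^ 2 ≤ ‖y‖ ^ 2 := by
    rw [inv_mul_le_iff₀ hB]
    exact hfyB
  linarith

end Bessel

theorem kframe_dual_lower_bound_general
    {H : Type*} [NormedAddCommGroup H] [InnerProductSpace ℂ H]
    {I : Type*}
    (K : H →L[ℂ] H) (f g : I → H) (B : ℝ) (hB : 0 < B)
    (hf : ∀ x : H, Summable (fun k => ‖(inner ℂ (f k) x : ℂ)‖ ^ 2) ∧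
      ∑' k, ‖(inner ℂ (f k) x : ℂ)‖ ^ 2 ≤ B * ‖x‖ ^ 2)
    (hg : ∃ D : ℝ, 0 < D ∧ ∀ x : H, Summable (fun k => ‖(inner ℂ (g k) x : ℂ)‖ ^ 2) ∧
      ∑' k, ‖(inner ℂ (g k) x : ℂ)‖ ^ 2 ≤ D * ‖x‖ ^ 2)
    (hdual : ∀ x : H, HasSum (fun k => (inner ℂ (g k) x : ℂ) • f k) (K x)) :
    ∀ x : H, B⁻¹ * ‖K x‖ ^ 2 ≤ ∑' k, ‖(inner ℂ (g k) x : ℂ)‖ ^ 2 := by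
  intro x
  obtain ⟨D, -, hgD⟩ := hg
  have hf' : IsBesselSeq ℂ f B := hf
  rw [inv_mul_le_iff₀ hB]
  exact hf'.norm_sq_le_of_hasSum hB (hgD x).1 (hdual x)

/-- If `(f k)` is a Bessel sequence with bound `B > 0`, `(g k)` a Bessel
sequence, and `∑ₖ ⟨g k, x⟩ • f k = K x` unconditionally for all `x`, then
`B⁻¹ ‖K x‖² ≤ ∑ₖ |⟨g k, x⟩|²`, i.e. `(g k)` is a `K*`-frame with lower bound `B⁻¹`. -/
theorem kframe_dual_lower_bound
    {H : Type*} [NormedAddCommGroup H] [InnerProductSpace ℂ H]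
    [CompleteSpace H] [TopologicalSpace.SeparableSpace H]
    {I : Type*} [Countable I]
    (K : H →L[ℂ] H) (f g : I → H) (B : ℝ) (hB : 0 < B)
    (hf : ∀ x : H, Summable (fun k => ‖(inner ℂ (f k) x : ℂ)‖ ^ 2) ∧
      ∑' k, ‖(inner ℂ (f k) x : ℂ)‖ ^ 2 ≤ B * ‖x‖ ^ 2)
    (hg : ∃ D : ℝ, 0 < D ∧ ∀ x : H, Summable (fun k => ‖(inner ℂ (g k) x : ℂ)‖ ^ 2) ∧
      ∑' k, ‖(inner ℂ (g k) x : ℂ)‖ ^ 2 ≤ D * ‖x‖ ^ 2)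
    (hdual : ∀ x : H, HasSum (fun k => (inner ℂ (g k) x : ℂ) • f k) (K x)) :
    ∀ x : H, B⁻¹ * ‖K x‖ ^ 2 ≤ ∑' k, ‖(inner ℂ (g k) x : ℂ)‖ ^ 2 :=
  kframe_dual_lower_bound_general K f g B hB hf hg hdual
end

section
/- Let H be a complex separable Hilbert space, K a bounded linear operator on H, (f_k)_{k∈I} a Bessel sequence in H, and (g_k)_{k∈I} a Bessel sequence in H with Bessel bound D > 0, such that for every x ∈ H the family (⟨g_k, x⟩ f_k)_{k∈I} is unconditionally summable with sum Kx. Then for every x ∈ H one has D⁻¹‖K*x‖² ≤ Σ_{k∈I} |⟨f_k, x⟩|²; in particular (f_k) is a K-frame with lower bound D⁻¹. -/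
open ContinuousLinearMap

open scoped ComplexConjugate InnerProductSpace lp

/-!
Put `y = K* x`. Testing the reconstruction `K y = ∑ₖ ⟨g k, y⟩ f k` against `x` gives
`‖y‖² = ⟨x, K y⟩ = ∑ₖ conj ⟨f k, x⟩ ⟨g k, y⟩`, an inner product in `ℓ²(I)` of the coefficient
sequences of `x` and `y`. Cauchy–Schwarz in `ℓ²` and the Bessel bound of `(g k)` then give
`‖y‖⁴ ≤ (∑ₖ |⟨f k, x⟩|²) · D ‖y‖²`, and dividing by `‖y‖²` finishes the proof.
-/

section SquareSummable

variable {I E 𝕜 : Type*} [NormedAddCommGroup E] [RCLike 𝕜]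

theorem memℓp_two_of_summable_sq {a : I → E} (ha : Summable fun k => ‖a k‖ ^ 2) : Memℓp a 2 :=
  memℓp_gen (by simpa using ha)

theorem lp.norm_sq_eq_tsum (v : ℓ²(I, E)) : ‖v‖ ^ 2 = ∑' k, ‖v k‖ ^ 2 := by
  simpa using lp.norm_rpow_eq_tsum (by norm_num) v

theorem norm_tsum_conj_mul_sq_le {a b : I → 𝕜} (ha : Summable fun k => ‖a k‖ ^ 2)
    (hb : Summable fun k => ‖b k‖ ^ 2) :
    ‖∑' k, conj (a k) * b k‖ ^ 2 ≤ (∑' k, ‖a k‖ ^ 2) * ∑' k, ‖b k‖ ^ 2 := by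
  let va : ℓ²(I, 𝕜) := ⟨a, memℓp_two_of_summable_sq ha⟩
  let vb : ℓ²(I, 𝕜) := ⟨b, memℓp_two_of_summable_sq hb⟩
  have hinner : ⟪va, vb⟫_𝕜 = ∑' k, conj (a k) * b k := by
    simp [lp.inner_eq_tsum, va, vb, mul_comm]
  rw [← hinner, ← lp.norm_sq_eq_tsum va, ← lp.norm_sq_eq_tsum vb, ← mul_pow]
  gcongr
  exact norm_inner_le_norm va vb

end SquareSummable

theorem HasSum.inner_left_of_smul {I 𝕜 H : Type*} [RCLike 𝕜] [NormedAddCommGroup H]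
    [InnerProductSpace 𝕜 H] {f g : I → H} {y z : H}
    (h : HasSum (fun k => ⟪g k, y⟫_𝕜 • f k) z) (x : H) :
    HasSum (fun k => conj ⟪f k, x⟫_𝕜 * ⟪g k, y⟫_𝕜) ⟪x, z⟫_𝕜 := by
  simpa [inner_smul_right, mul_comm] using h.mapL (innerSL 𝕜 x)

theorem kframe_lower_bound_general
    {H : Type*} [NormedAddCommGroup H] [InnerProductSpace ℂ H]
    [CompleteSpace H]
    {I : Type*}
    (K : H →L[ℂ] H) (f g : I → H) (D : ℝ) (hD : 0 < D)
    (hf : ∃ B : ℝ, 0 < B ∧ ∀ x : H, Summable (fun k => ‖(inner ℂ (f k) x : ℂ)‖ ^ 2) ∧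
      ∑' k, ‖(inner ℂ (f k) x : ℂ)‖ ^ 2 ≤ B * ‖x‖ ^ 2)
    (hg : ∀ x : H, Summable (fun k => ‖(inner ℂ (g k) x : ℂ)‖ ^ 2) ∧
      ∑' k, ‖(inner ℂ (g k) x : ℂ)‖ ^ 2 ≤ D * ‖x‖ ^ 2)
    (hdual : ∀ x : H, HasSum (fun k => (inner ℂ (g k) x : ℂ) • f k) (K x)) :
    ∀ x : H, D⁻¹ * ‖adjoint K x‖ ^ 2 ≤ ∑' k, ‖(inner ℂ (f k) x : ℂ)‖ ^ 2 := by
  intro x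
  obtain ⟨_, _, hf_bessel⟩ := hf
  set y := adjoint K x
  set S := ∑' k, ‖⟪f k, x⟫_ℂ‖ ^ 2
  have hxKy : ⟪x, K y⟫_ℂ = (‖y‖ : ℂ) ^ 2 := by
    rw [← adjoint_inner_left, inner_self_eq_norm_sq_to_K]
    rfl
  have hy : ‖y‖ ^ 2 * ‖y‖ ^ 2 ≤ (D * S) * ‖y‖ ^ 2 :=
    calc ‖y‖ ^ 2 * ‖y‖ ^ 2 = ‖⟪x, K y⟫_ℂ‖ ^ 2 := by simp [hxKy, ← sq]
      _ ≤ S * ∑' k, ‖⟪g k, y⟫_ℂ‖ ^ 2 := by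
        rw [← ((hdual y).inner_left_of_smul x).tsum_eq]
        exact norm_tsum_conj_mul_sq_le (hf_bessel x).1 (hg y).1
      _ ≤ S * (D * ‖y‖ ^ 2) := by gcongr; exact (hg y).2
      _ = (D * S) * ‖y‖ ^ 2 := by ring
  rw [inv_mul_le_iff₀ hD]
  obtain hy0 | hy0 := (sq_nonneg ‖y‖).eq_or_lt'
  · rw [hy0]; positivity
  · exact le_of_mul_le_mul_right hy hy0

/-- If `(f k)` is a Bessel sequence, `(g k)` a Bessel sequence with bound
`D > 0`, and `∑ₖ ⟨g k, x⟩ • f k = K x` unconditionally for all `x`, then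
`D⁻¹ ‖K* x‖² ≤ ∑ₖ |⟨f k, x⟩|²`, i.e. `(f k)` is a `K`-frame with lower bound `D⁻¹`. -/
theorem kframe_lower_bound
    {H : Type*} [NormedAddCommGroup H] [InnerProductSpace ℂ H]
    [CompleteSpace H] [TopologicalSpace.SeparableSpace H]
    {I : Type*} [Countable I]
    (K : H →L[ℂ] H) (f g : I → H) (D : ℝ) (hD : 0 < D)
    (hf : ∃ B : ℝ, 0 < B ∧ ∀ x : H, Summable (fun k => ‖(inner ℂ (f k) x : ℂ)‖ ^ 2) ∧
      ∑' k, ‖(inner ℂ (f k) x : ℂ)‖ ^ 2 ≤ B * ‖x‖ ^ 2)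
    (hg : ∀ x : H, Summable (fun k => ‖(inner ℂ (g k) x : ℂ)‖ ^ 2) ∧
      ∑' k, ‖(inner ℂ (g k) x : ℂ)‖ ^ 2 ≤ D * ‖x‖ ^ 2)
    (hdual : ∀ x : H, HasSum (fun k => (inner ℂ (g k) x : ℂ) • f k) (K x)) :
    ∀ x : H, D⁻¹ * ‖adjoint K x‖ ^ 2 ≤ ∑' k, ‖(inner ℂ (f k) x : ℂ)‖ ^ 2 :=
  kframe_lower_bound_general K f g D hD hf hg hdual
end

section
/- Let H be a complex separable Hilbert space, K a bounded linear operator on H with closed range R(K), and P the orthogonal projection of H onto R(K). Let (f_k)_{k∈I} be a Bessel sequence in H with synthesis operator T_F and frame operator S = T_F T_F*, and let Q be a bounded linear operator on H satisfying P S Q* y = y for every y ∈ R(K). Then a Bessel sequence (g_k)_{k∈I} is a K-dual of (P f_k)_{k∈I} if and only if there exists a bounded linear operator M : H → ℓ²(I) such that P T_F M = 0 and g_k = K* Q f_k + M* e_k for every k ∈ I, where (e_k) is the standard orthonormal basis of ℓ²(I). (For the converse direction the operator M = T_G* − T_F* Q* K works, where T_G is the synthesis operator of (g_k).) -/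
/-! If `A : H → ℓ²(I)` is the analysis operator of `(g_k)`, i.e. `A* e_k = g_k`, then
`∑ ⟪g_k, x⟫ P f_k = P T_F A x`, so `(g_k)` is a `K`-dual of `(P f_k)` exactly when `P T_F A = K`.
The hypothesis on `Q` says that `A = T_F* Q* K` is one solution, whose adjoint sends `e_k` to
`K* Q f_k`; all others differ from it by an `M` with `P T_F M = 0`. -/

open ContinuousLinearMap

section StandardBasis

variable {H : Type*} [NormedAddCommGroup H] [InnerProductSpace ℂ H] {I : Type*} [DecidableEq I]

theorem ContinuousLinearMap.hasSum_smul_apply_single (T : lp (fun _ : I => ℂ) 2 →L[ℂ] H)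
    (a : lp (fun _ : I => ℂ) 2) :
    HasSum (fun k => a k • T (lp.single 2 k 1)) (T a) := by
  refine ((lp.hasSum_single ENNReal.ofNat_ne_top a).mapL T).congr_fun fun k => ?_
  simp only [← map_smul, ← lp.single_smul, smul_eq_mul, mul_one]

variable [CompleteSpace H]

theorem ContinuousLinearMap.inner_adjoint_single_one (A : H →L[ℂ] lp (fun _ : I => ℂ) 2)
    (x : H) (k : I) : inner ℂ (adjoint A (lp.single 2 k 1)) x = A x k := by
  simp [adjoint_inner_left, lp.inner_single_left]

theorem hasSum_inner_smul_eq_comp_apply {f g : I → H} (T : lp (fun _ : I => ℂ) 2 →L[ℂ] H)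
    (A : H →L[ℂ] lp (fun _ : I => ℂ) 2) (hT : ∀ k, T (lp.single 2 k 1) = f k)
    (hA : ∀ k, adjoint A (lp.single 2 k 1) = g k) (x : H) :
    HasSum (fun k => inner ℂ (g k) x • f k) (T (A x)) := by
  simpa only [← hT, ← hA, inner_adjoint_single_one] using T.hasSum_smul_apply_single (A x)

theorem forall_hasSum_inner_smul_iff_comp_eq {f g : I → H} (T : lp (fun _ : I => ℂ) 2 →L[ℂ] H)
    (A : H →L[ℂ] lp (fun _ : I => ℂ) 2) (L : H →L[ℂ] H) (hT : ∀ k, T (lp.single 2 k 1) = f k)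
    (hA : ∀ k, adjoint A (lp.single 2 k 1) = g k) :
    (∀ x, HasSum (fun k => inner ℂ (g k) x • f k) (L x)) ↔ T.comp A = L := by
  refine ⟨fun h => ext fun x => ?_, fun h x => h ▸ hasSum_inner_smul_eq_comp_apply T A hT hA x⟩
  exact (hasSum_inner_smul_eq_comp_apply T A hT hA x).unique (h x)

theorem exists_adjoint_single_eq_of_bessel (g : I → H) {D : ℝ}
    (hg : ∀ x : H, Summable (fun k => ‖(inner ℂ (g k) x : ℂ)‖ ^ 2) ∧
      ∑' k, ‖(inner ℂ (g k) x : ℂ)‖ ^ 2 ≤ D * ‖x‖ ^ 2) :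
    ∃ A : H →L[ℂ] lp (fun _ : I => ℂ) 2, ∀ k, adjoint A (lp.single 2 k 1) = g k := by
  have hmem (x : H) : Memℓp (fun k => inner ℂ (g k) x) 2 := memℓp_gen (by simpa using (hg x).1)
  let L : H →ₗ[ℂ] lp (fun _ : I => ℂ) 2 :=
    { toFun x := ⟨fun k => inner ℂ (g k) x, hmem x⟩
      map_add' x y := lp.ext <| funext fun k => inner_add_right _ _ _
      map_smul' c x := lp.ext <| funext fun k => inner_smul_right _ _ _ }
  have hnorm (x : H) : ‖L x‖ ^ 2 = ∑' k, ‖inner ℂ (g k) x‖ ^ 2 := by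
    have h := lp.norm_rpow_eq_tsum (p := 2) (by norm_num) (L x)
    simp only [ENNReal.toReal_ofNat, Real.rpow_two] at h
    exact h
  refine ⟨L.mkContinuous √D fun x => ?_, fun k => ext_inner_right ℂ fun x => ?_⟩
  · calc ‖L x‖ ≤ √(D * ‖x‖ ^ 2) := Real.le_sqrt_of_sq_le ((hnorm x).trans_le (hg x).2)
      _ = √D * ‖x‖ := by rw [Real.sqrt_mul' _ (by positivity), Real.sqrt_sq (norm_nonneg x)]
  · rw [inner_adjoint_single_one]
    rfl

end StandardBasis

theorem K_dual_characterization_closed_range_general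
    {H : Type*} [NormedAddCommGroup H] [InnerProductSpace ℂ H]
    [CompleteSpace H]
    {I : Type*} [DecidableEq I]
    (K P Q : H →L[ℂ] H) (f g : I → H)
    (TF : lp (fun _ : I => ℂ) 2 →L[ℂ] H)
    (hTF : ∀ k, TF (lp.single 2 k 1) = f k)
    (hg : ∃ D : ℝ, 0 < D ∧ ∀ x : H, Summable (fun k => ‖(inner ℂ (g k) x : ℂ)‖ ^ 2) ∧
      ∑' k, ‖(inner ℂ (g k) x : ℂ)‖ ^ 2 ≤ D * ‖x‖ ^ 2)
    (hQ : ∀ y ∈ Set.range ⇑K, P (TF ((adjoint TF) ((adjoint Q) y))) = y) :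
    (∀ x : H, HasSum (fun k => (inner ℂ (g k) x : ℂ) • P (f k)) (K x)) ↔
      ∃ M : H →L[ℂ] lp (fun _ : I => ℂ) 2,
        P.comp (TF.comp M) = 0 ∧
        ∀ k, g k = (adjoint K) (Q (f k)) + (adjoint M) (lp.single 2 k 1) := by
  set C := (adjoint TF).comp ((adjoint Q).comp K)
  have hPTF (k : I) : (P.comp TF) (lp.single 2 k 1) = P (f k) := by simp [hTF]
  have hPTFC : P.comp (TF.comp C) = K := ext fun x => hQ (K x) ⟨x, rfl⟩
  have hC (k : I) : adjoint C (lp.single 2 k 1) = adjoint K (Q (f k)) := by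
    simp [C, adjoint_comp, hTF]
  constructor
  · intro hdual
    obtain ⟨D, -, hD⟩ := hg
    obtain ⟨A, hA⟩ := exists_adjoint_single_eq_of_bessel g hD
    have hPTFA := (forall_hasSum_inner_smul_iff_comp_eq (P.comp TF) A K hPTF hA).1 hdual
    refine ⟨A - C, ?_, fun k => ?_⟩
    · rw [comp_sub, comp_sub, ← comp_assoc, hPTFA, hPTFC, sub_self]
    · rw [map_sub, sub_apply, hA, hC, add_sub_cancel]
  · rintro ⟨M, hPTFM, hMg⟩
    refine (forall_hasSum_inner_smul_iff_comp_eq (P.comp TF) (C + M) K hPTF fun k => ?_).2 ?_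
    · rw [map_add, add_apply, hC, hMg]
    · rw [comp_add, comp_assoc, comp_assoc, hPTFC, hPTFM, add_zero]

/-- characterization of all `K`-duals of `(P f_k)` in terms of the canonical
`K`-dual `(K* Q f_k)`: a Bessel sequence `(g k)` is a `K`-dual of `(P f_k)` iff there is a
bounded operator `M : H → ℓ²(I)` with `P T_F M = 0` and `g k = K* Q f_k + M* e_k`. -/
theorem K_dual_characterization_closed_range
    {H : Type*} [NormedAddCommGroup H] [InnerProductSpace ℂ H]
    [CompleteSpace H] [TopologicalSpace.SeparableSpace H]
    {I : Type*} [Countable I] [DecidableEq I]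
    (K P Q : H →L[ℂ] H) (f g : I → H)
    (TF : lp (fun _ : I => ℂ) 2 →L[ℂ] H)
    (hTF : ∀ k, TF (lp.single 2 k 1) = f k)
    (hK : IsClosed (Set.range ⇑K))
    (hPmem : ∀ x : H, P x ∈ Set.range ⇑K)
    (hPfix : ∀ y ∈ Set.range ⇑K, P y = y)
    (hPsa : adjoint P = P)
    (hf : ∃ B : ℝ, 0 < B ∧ ∀ x : H, Summable (fun k => ‖(inner ℂ (f k) x : ℂ)‖ ^ 2) ∧
      ∑' k, ‖(inner ℂ (f k) x : ℂ)‖ ^ 2 ≤ B * ‖x‖ ^ 2)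
    (hg : ∃ D : ℝ, 0 < D ∧ ∀ x : H, Summable (fun k => ‖(inner ℂ (g k) x : ℂ)‖ ^ 2) ∧
      ∑' k, ‖(inner ℂ (g k) x : ℂ)‖ ^ 2 ≤ D * ‖x‖ ^ 2)
    (hQ : ∀ y ∈ Set.range ⇑K, P (TF ((adjoint TF) ((adjoint Q) y))) = y) :
    (∀ x : H, HasSum (fun k => (inner ℂ (g k) x : ℂ) • P (f k)) (K x)) ↔
      ∃ M : H →L[ℂ] lp (fun _ : I => ℂ) 2,
        P.comp (TF.comp M) = 0 ∧
        ∀ k, g k = (adjoint K) (Q (f k)) + (adjoint M) (lp.single 2 k 1) :=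
  K_dual_characterization_closed_range_general K P Q f g TF hTF hg hQ
end

section
/- Let H be a complex separable Hilbert space, K a bounded linear operator on H, and (f_k)_{k∈I} a Bessel sequence in H with synthesis operator T_F. Then a family (g_k)_{k∈I} in H is a K-dual of (f_k)_{k∈I} if and only if there exists a bounded linear operator M : ℓ²(I) → H such that T_F M* = K and g_k = M e_k for every k ∈ I, where (e_k) is the standard orthonormal basis of ℓ²(I). -/
/-!
The analysis operator `x ↦ (⟪g k, x⟫)ₖ` of a Bessel sequence `g` is a bounded map `H → ℓ²(I)`
whose adjoint sends `e_k` to `g k`; conversely, for every bounded `M : ℓ²(I) → H` the coordinates of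
`M* x` are `⟪M e_k, x⟫`, so `(M e_k)` is Bessel with analysis operator `M*`. Since
`T_F u = ∑ₖ u k • f k`, the `K`-dual condition says precisely `T_F M* = K` for `M` the adjoint of
the analysis operator of `g`.
-/

open ContinuousLinearMap
open scoped lp

namespace lp

variable {I 𝕜 : Type*} [NormedField 𝕜]

theorem hasSum_smul_map_single [DecidableEq I] {E : Type*} [NormedAddCommGroup E]
    [NormedSpace 𝕜 E] {p : ENNReal} [Fact (1 ≤ p)] (hp : p ≠ ⊤) (T : ℓ^p(I, 𝕜) →L[𝕜] E)
    (u : ℓ^p(I, 𝕜)) : HasSum (fun k => u k • T (lp.single p k 1)) (T u) := by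
  convert (lp.hasSum_single hp u).mapL T using 2 with k
  rw [← map_smul, ← lp.single_smul, smul_eq_mul, mul_one]

theorem hasSum_norm_sq (u : ℓ^2(I, 𝕜)) : HasSum (fun k => ‖u k‖ ^ 2) (‖u‖ ^ 2) := by
  simpa only [ENNReal.toReal_ofNat, Real.rpow_two] using lp.hasSum_norm (by simp) u

theorem memℓp_two_of_summable_norm_sq {u : I → 𝕜} (hu : Summable fun k => ‖u k‖ ^ 2) :
    Memℓp u 2 :=
  memℓp_gen (by simpa only [ENNReal.toReal_ofNat, Real.rpow_two] using hu)

end lp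

section BesselSequence

variable {𝕜 H I : Type*} [RCLike 𝕜] [NormedAddCommGroup H] [InnerProductSpace 𝕜 H]

variable (𝕜) in
def IsBesselSequence (g : I → H) : Prop :=
  ∃ D : ℝ, 0 < D ∧ ∀ x : H, Summable (fun k => ‖inner 𝕜 (g k) x‖ ^ 2) ∧
    ∑' k, ‖inner 𝕜 (g k) x‖ ^ 2 ≤ D * ‖x‖ ^ 2

namespace IsBesselSequence

variable {g : I → H} (hg : IsBesselSequence 𝕜 g)

noncomputable def analysis : H →L[𝕜] ℓ^2(I, 𝕜) :=
  LinearMap.mkContinuousOfExistsBound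
    { toFun := fun x => ⟨fun k => inner 𝕜 (g k) x, lp.memℓp_two_of_summable_norm_sq <| by
          obtain ⟨D, -, hD⟩ := hg
          exact (hD x).1⟩
      map_add' := fun x y => lp.ext <| funext fun k => inner_add_right _ _ _
      map_smul' := fun c x => lp.ext <| funext fun k => inner_smul_right _ _ _ } <| by
    obtain ⟨D, hD_pos, hD⟩ := hg
    refine ⟨√D, fun x => ?_⟩
    rw [← pow_le_pow_iff_left₀ (norm_nonneg _) (by positivity) two_ne_zero, mul_pow,
      Real.sq_sqrt hD_pos.le]
    exact (lp.hasSum_norm_sq _).tsum_eq.symm.trans_le (hD x).2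

@[simp]
theorem analysis_apply (x : H) (k : I) : hg.analysis x k = inner 𝕜 (g k) x := rfl

end IsBesselSequence

theorem inner_map_single_eq_adjoint_apply [DecidableEq I] [CompleteSpace H]
    (M : ℓ^2(I, 𝕜) →L[𝕜] H) (x : H) (k : I) :
    inner 𝕜 (M (lp.single 2 k 1)) x = adjoint M x k := by
  rw [← adjoint_inner_right, lp.inner_single_left]
  simp only [RCLike.inner_apply, map_one, mul_one]

theorem isBesselSequence_map_single [DecidableEq I] [CompleteSpace H]
    (M : ℓ^2(I, 𝕜) →L[𝕜] H) : IsBesselSequence 𝕜 fun k => M (lp.single 2 k 1) := by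
  refine ⟨‖adjoint M‖ ^ 2 + 1, by positivity, fun x => ?_⟩
  simp only [inner_map_single_eq_adjoint_apply]
  have hsum := lp.hasSum_norm_sq (adjoint M x)
  refine ⟨hsum.summable, ?_⟩
  calc ∑' k, ‖adjoint M x k‖ ^ 2 = ‖adjoint M x‖ ^ 2 := hsum.tsum_eq
    _ ≤ (‖adjoint M‖ * ‖x‖) ^ 2 := by gcongr; exact (adjoint M).le_opNorm x
    _ ≤ (‖adjoint M‖ ^ 2 + 1) * ‖x‖ ^ 2 := by nlinarith [sq_nonneg ‖x‖]

theorem IsBesselSequence.adjoint_analysis_single [DecidableEq I] [CompleteSpace H] {g : I → H}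
    (hg : IsBesselSequence 𝕜 g) (k : I) : adjoint hg.analysis (lp.single 2 k 1) = g k :=
  ext_inner_right 𝕜 fun x => by
    rw [inner_map_single_eq_adjoint_apply, adjoint_adjoint, hg.analysis_apply]

end BesselSequence

theorem K_dual_characterization_general
    {H : Type*} [NormedAddCommGroup H] [InnerProductSpace ℂ H]
    [CompleteSpace H]
    {I : Type*} [DecidableEq I]
    (K : H →L[ℂ] H) (f g : I → H)
    (TF : lp (fun _ : I => ℂ) 2 →L[ℂ] H)
    (hTF : ∀ k, TF (lp.single 2 k 1) = f k) :
    ((∃ D : ℝ, 0 < D ∧ ∀ x : H, Summable (fun k => ‖(inner ℂ (g k) x : ℂ)‖ ^ 2) ∧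
        ∑' k, ‖(inner ℂ (g k) x : ℂ)‖ ^ 2 ≤ D * ‖x‖ ^ 2) ∧
      (∀ x : H, HasSum (fun k => (inner ℂ (g k) x : ℂ) • f k) (K x))) ↔
      ∃ M : lp (fun _ : I => ℂ) 2 →L[ℂ] H,
        TF.comp (adjoint M) = K ∧ ∀ k, g k = M (lp.single 2 k 1) := by
  have hsynthesis := lp.hasSum_smul_map_single ENNReal.ofNat_ne_top TF
  simp only [hTF] at hsynthesis
  constructor
  · rintro ⟨hg : IsBesselSequence ℂ g, hsum⟩
    refine ⟨adjoint hg.analysis, ?_, fun k => (hg.adjoint_analysis_single k).symm⟩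
    ext x
    rw [comp_apply, adjoint_adjoint]
    exact (hsynthesis _).unique (hsum x)
  · rintro ⟨M, rfl, hgM⟩
    obtain rfl : g = fun k => M (lp.single 2 k 1) := funext hgM
    refine ⟨isBesselSequence_map_single M, fun x => ?_⟩
    simpa only [inner_map_single_eq_adjoint_apply, comp_apply] using hsynthesis (adjoint M x)

/-- characterization of all `K`-duals of a `K`-frame (range of `K` not
necessarily closed): `(g k)` is a `K`-dual of `(f k)` iff there is a bounded operator
`M : ℓ²(I) → H` with `T_F M* = K` and `g k = M e_k` for all `k`. -/
theorem K_dual_characterization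
    {H : Type*} [NormedAddCommGroup H] [InnerProductSpace ℂ H]
    [CompleteSpace H] [TopologicalSpace.SeparableSpace H]
    {I : Type*} [Countable I] [DecidableEq I]
    (K : H →L[ℂ] H) (f g : I → H)
    (TF : lp (fun _ : I => ℂ) 2 →L[ℂ] H)
    (hTF : ∀ k, TF (lp.single 2 k 1) = f k)
    (hf : ∃ B : ℝ, 0 < B ∧ ∀ x : H, Summable (fun k => ‖(inner ℂ (f k) x : ℂ)‖ ^ 2) ∧
      ∑' k, ‖(inner ℂ (f k) x : ℂ)‖ ^ 2 ≤ B * ‖x‖ ^ 2) :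
    ((∃ D : ℝ, 0 < D ∧ ∀ x : H, Summable (fun k => ‖(inner ℂ (g k) x : ℂ)‖ ^ 2) ∧
        ∑' k, ‖(inner ℂ (g k) x : ℂ)‖ ^ 2 ≤ D * ‖x‖ ^ 2) ∧
      (∀ x : H, HasSum (fun k => (inner ℂ (g k) x : ℂ) • f k) (K x))) ↔
      ∃ M : lp (fun _ : I => ℂ) 2 →L[ℂ] H,
        TF.comp (adjoint M) = K ∧ ∀ k, g k = M (lp.single 2 k 1) :=
  K_dual_characterization_general K f g TF hTF
end

section
/- Let H be a complex separable Hilbert space, K a bounded linear operator on H, (f_k)_{k∈I} and (g_k)_{k∈I} Bessel sequences in H such that for every x ∈ H the family (⟨g_k, x⟩ f_k)_{k∈I} is unconditionally summable with sum Kx. Then for every x ∈ H the family (⟨f_k, x⟩ g_k)_{k∈I} is unconditionally summable with sum K*x. -/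
open ContinuousLinearMap RCLike
open scoped InnerProductSpace ComplexConjugate

/-! The synthesis operator of a Bessel sequence with bound `D` has norm at most `√D`, so
square-summable coefficients against `(g k)` give a Cauchy, hence convergent, series. Its sum
is identified with `K* x` by testing against every `y`: the coefficients of
`⟪∑ ⟪f k, x⟫ • g k, y⟫` and of `⟪x, ∑ ⟪g k, y⟫ • f k⟫ = ⟪x, K y⟫` agree term by term. -/

section Bessel

variable {𝕜 E ι : Type*} [RCLike 𝕜] [NormedAddCommGroup E] [InnerProductSpace 𝕜 E]

lemma norm_sum_smul_sq_le_of_bessel {g : ι → E} {D : ℝ} (hD : 0 ≤ D)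
    (hg : ∀ x (s : Finset ι), ∑ k ∈ s, ‖⟪g k, x⟫_𝕜‖ ^ 2 ≤ D * ‖x‖ ^ 2)
    (c : ι → 𝕜) (s : Finset ι) :
    ‖∑ k ∈ s, c k • g k‖ ^ 2 ≤ D * ∑ k ∈ s, ‖c k‖ ^ 2 := by
  set v := ∑ k ∈ s, c k • g k
  have hv : ‖v‖ ^ 2 ≤ ∑ k ∈ s, ‖c k‖ * ‖⟪g k, v⟫_𝕜‖ := calc
    ‖v‖ ^ 2 = re ⟪v, v⟫_𝕜 := (inner_self_eq_norm_sq v).symm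
    _ ≤ ‖⟪v, v⟫_𝕜‖ := re_le_norm _
    _ = ‖∑ k ∈ s, conj (c k) * ⟪g k, v⟫_𝕜‖ := by
      simp only [v, sum_inner, inner_smul_left]
    _ ≤ ∑ k ∈ s, ‖conj (c k) * ⟪g k, v⟫_𝕜‖ := norm_sum_le _ _
    _ = ∑ k ∈ s, ‖c k‖ * ‖⟪g k, v⟫_𝕜‖ := by simp only [norm_mul, norm_conj]
  have hCS := Finset.sum_mul_sq_le_sq_mul_sq s (fun k => ‖c k‖) (fun k => ‖⟪g k, v⟫_𝕜‖)
  have hv4 : (‖v‖ ^ 2) ^ 2 ≤ (∑ k ∈ s, ‖c k‖ ^ 2) * (D * ‖v‖ ^ 2) :=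
    (pow_le_pow_left₀ (by positivity) hv 2).trans
      (hCS.trans (mul_le_mul_of_nonneg_left (hg v s) (by positivity)))
  have hS : 0 ≤ ∑ k ∈ s, ‖c k‖ ^ 2 := by positivity
  nlinarith [mul_nonneg hD hS]

lemma summable_smul_of_bessel [CompleteSpace E] {g : ι → E} {D : ℝ} (hD : 0 ≤ D)
    (hg : ∀ x (s : Finset ι), ∑ k ∈ s, ‖⟪g k, x⟫_𝕜‖ ^ 2 ≤ D * ‖x‖ ^ 2)
    {c : ι → 𝕜} (hc : Summable fun k => ‖c k‖ ^ 2) :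
    Summable fun k => c k • g k := by
  refine summable_iff_vanishing_norm.2 fun ε hε => ?_
  obtain ⟨s, hs⟩ := summable_iff_vanishing_norm.1 hc (ε ^ 2 / (D + 1)) (by positivity)
  refine ⟨s, fun t ht => lt_of_pow_lt_pow_left₀ 2 hε.le ?_⟩
  have ht' : ∑ k ∈ t, ‖c k‖ ^ 2 < ε ^ 2 / (D + 1) := (le_abs_self _).trans_lt (hs t ht)
  calc ‖∑ k ∈ t, c k • g k‖ ^ 2 ≤ D * ∑ k ∈ t, ‖c k‖ ^ 2 :=
        norm_sum_smul_sq_le_of_bessel hD hg c t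
    _ ≤ (D + 1) * ∑ k ∈ t, ‖c k‖ ^ 2 := by gcongr; linarith
    _ < (D + 1) * (ε ^ 2 / (D + 1)) := by gcongr
    _ = ε ^ 2 := by field_simp

lemma eq_adjoint_apply_of_hasSum [CompleteSpace E] (K : E →L[𝕜] E) {f g : ι → E}
    (hK : ∀ y, HasSum (fun k => ⟪g k, y⟫_𝕜 • f k) (K y)) {x S : E}
    (hS : HasSum (fun k => ⟪f k, x⟫_𝕜 • g k) S) : S = adjoint K x := by
  refine ext_inner_right 𝕜 fun y => ?_
  have hSy : HasSum (fun k => ⟪x, f k⟫_𝕜 * ⟪g k, y⟫_𝕜) ⟪S, y⟫_𝕜 := by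
    simpa [inner_smul_left] using (innerSLFlip 𝕜 y).hasSum hS
  have hKy : HasSum (fun k => ⟪x, f k⟫_𝕜 * ⟪g k, y⟫_𝕜) ⟪x, K y⟫_𝕜 := by
    simpa [inner_smul_right, mul_comm] using (innerSL 𝕜 x).hasSum (hK y)
  rw [hSy.unique hKy, adjoint_inner_left]

end Bessel

theorem K_dual_adjoint_reconstruction_general
    {H : Type*} [NormedAddCommGroup H] [InnerProductSpace ℂ H]
    [CompleteSpace H]
    {I : Type*}
    (K : H →L[ℂ] H) (f g : I → H)
    (hf : ∃ B : ℝ, 0 < B ∧ ∀ x : H, Summable (fun k => ‖(inner ℂ (f k) x : ℂ)‖ ^ 2) ∧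
      ∑' k, ‖(inner ℂ (f k) x : ℂ)‖ ^ 2 ≤ B * ‖x‖ ^ 2)
    (hg : ∃ D : ℝ, 0 < D ∧ ∀ x : H, Summable (fun k => ‖(inner ℂ (g k) x : ℂ)‖ ^ 2) ∧
      ∑' k, ‖(inner ℂ (g k) x : ℂ)‖ ^ 2 ≤ D * ‖x‖ ^ 2)
    (hdual : ∀ x : H, HasSum (fun k => (inner ℂ (g k) x : ℂ) • f k) (K x)) :
    ∀ x : H, HasSum (fun k => (inner ℂ (f k) x : ℂ) • g k) ((adjoint K) x) := by
  obtain ⟨_, -, hf⟩ := hf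
  obtain ⟨D, hD, hg⟩ := hg
  have hg_fin : ∀ x (s : Finset I), ∑ k ∈ s, ‖⟪g k, x⟫_ℂ‖ ^ 2 ≤ D * ‖x‖ ^ 2 := fun x s =>
    ((hg x).1.sum_le_tsum s fun _ _ => by positivity).trans (hg x).2
  intro x
  obtain ⟨S, hS⟩ := summable_smul_of_bessel hD.le hg_fin (hf x).1
  rwa [← eq_adjoint_apply_of_hasSum K hdual hS]

/-- if the Bessel sequences `(f k)` and `(g k)` satisfy
`∑ₖ ⟨g k, x⟩ • f k = K x` unconditionally for every `x`, then they also satisfy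
`∑ₖ ⟨f k, x⟩ • g k = K* x` unconditionally for every `x`. -/
theorem K_dual_adjoint_reconstruction
    {H : Type*} [NormedAddCommGroup H] [InnerProductSpace ℂ H]
    [CompleteSpace H] [TopologicalSpace.SeparableSpace H]
    {I : Type*} [Countable I]
    (K : H →L[ℂ] H) (f g : I → H)
    (hf : ∃ B : ℝ, 0 < B ∧ ∀ x : H, Summable (fun k => ‖(inner ℂ (f k) x : ℂ)‖ ^ 2) ∧
      ∑' k, ‖(inner ℂ (f k) x : ℂ)‖ ^ 2 ≤ B * ‖x‖ ^ 2)
    (hg : ∃ D : ℝ, 0 < D ∧ ∀ x : H, Summable (fun k => ‖(inner ℂ (g k) x : ℂ)‖ ^ 2) ∧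
      ∑' k, ‖(inner ℂ (g k) x : ℂ)‖ ^ 2 ≤ D * ‖x‖ ^ 2)
    (hdual : ∀ x : H, HasSum (fun k => (inner ℂ (g k) x : ℂ) • f k) (K x)) :
    ∀ x : H, HasSum (fun k => (inner ℂ (f k) x : ℂ) • g k) ((adjoint K) x) :=
  K_dual_adjoint_reconstruction_general K f g hf hg hdual
end

section
/- Let H be a complex separable Hilbert space, K a bounded linear operator on H with closed range R(K) and Moore–Penrose pseudo-inverse K†, and let (f_k)_{k∈I} and (g_k)_{k∈I} be Bessel sequences in H with synthesis operators T_F and T_G. Then for every x ∈ R(K), ‖x − Σ_{k∈I} ⟨g_k, K†x⟩ f_k‖ ≤ ‖K − T_F T_G*‖ · ‖K†‖ · ‖x‖. In particular, if ‖K†‖ = 1 and (g_k) is an approximate K-dual of (f_k) (i.e. ‖K − T_F T_G*‖ < 1), then ‖x − T_F T_G* K† x‖ < ‖x‖ for every nonzero x ∈ R(K). -/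
open ContinuousLinearMap

/-! On `R(K)` the identity `K K† K = K` gives `x = K K† x`, so
`x - T_F T_G* K† x = (K - T_F T_G*) K† x`, whose norm is at most `‖K - T_F T_G*‖ ‖K†‖ ‖x‖`.
The series `∑ₖ ⟨g k, K† x⟩ f k` is `T_F T_G* K† x` written out in coordinates. -/

section ContinuousLinearMapOnLp

variable {𝕜 : Type*} {I : Type*} [DecidableEq I]

theorem ContinuousLinearMap.lp_apply_eq_tsum [NontriviallyNormedField 𝕜]
    {E : Type*} [NormedAddCommGroup E] [NormedSpace 𝕜 E]
    {p : ENNReal} [Fact (1 ≤ p)] (hp : p ≠ ⊤)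
    (T : lp (fun _ : I => 𝕜) p →L[𝕜] E) (v : lp (fun _ : I => 𝕜) p) :
    T v = ∑' k, v k • T (lp.single p k 1) := by
  have hsingle : ∀ k, lp.single (E := fun _ : I => 𝕜) p k (v k) =
      v k • lp.single p k (1 : 𝕜) := fun k => by
    rw [← lp.single_smul, smul_eq_mul, mul_one]
  have hsum := T.hasSum (lp.hasSum_single hp v)
  simp only [hsingle, map_smul] at hsum
  exact hsum.tsum_eq.symm

variable [RCLike 𝕜] {H : Type*} [NormedAddCommGroup H] [InnerProductSpace 𝕜 H]
  [CompleteSpace H]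

theorem ContinuousLinearMap.lp_adjoint_apply (T : lp (fun _ : I => 𝕜) 2 →L[𝕜] H)
    (y : H) (k : I) :
    adjoint T y k = inner 𝕜 (T (lp.single 2 k 1)) y := by
  simpa [lp.inner_single_left] using adjoint_inner_right T (lp.single 2 k 1) y

theorem ContinuousLinearMap.lp_comp_adjoint_apply
    (TF TG : lp (fun _ : I => 𝕜) 2 →L[𝕜] H) (y : H) :
    TF (adjoint TG y) =
      ∑' k, inner 𝕜 (TG (lp.single 2 k 1)) y • TF (lp.single 2 k 1) := by
  rw [TF.lp_apply_eq_tsum (by norm_num)]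
  simp only [lp_adjoint_apply]

end ContinuousLinearMapOnLp

section GeneralizedInverse

variable {𝕜 : Type*} [NontriviallyNormedField 𝕜] {E : Type*} [NormedAddCommGroup E]
  [NormedSpace 𝕜 E] {K Kd : E →L[𝕜] E}

theorem ContinuousLinearMap.apply_apply_of_comp_comp_eq (h : K.comp (Kd.comp K) = K)
    {x : E} (hx : x ∈ Set.range K) : K (Kd x) = x := by
  obtain ⟨y, rfl⟩ := hx
  exact congr($h y)

theorem ContinuousLinearMap.norm_sub_apply_le_of_comp_comp_eq
    (h : K.comp (Kd.comp K) = K) (A : E →L[𝕜] E) {x : E} (hx : x ∈ Set.range K) :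
    ‖x - A (Kd x)‖ ≤ ‖K - A‖ * ‖Kd‖ * ‖x‖ := by
  calc ‖x - A (Kd x)‖ = ‖(K - A) (Kd x)‖ := by
        rw [sub_apply, apply_apply_of_comp_comp_eq h hx]
    _ ≤ ‖K - A‖ * ‖Kd x‖ := le_opNorm _ _
    _ ≤ ‖K - A‖ * (‖Kd‖ * ‖x‖) := by gcongr; exact le_opNorm _ _
    _ = ‖K - A‖ * ‖Kd‖ * ‖x‖ := (mul_assoc _ _ _).symm

end GeneralizedInverse

theorem approximate_K_dual_estimate_general
    {H : Type*} [NormedAddCommGroup H] [InnerProductSpace ℂ H]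
    [CompleteSpace H]
    {I : Type*} [DecidableEq I]
    (K Kd : H →L[ℂ] H) (f g : I → H)
    (TF TG : lp (fun _ : I => ℂ) 2 →L[ℂ] H)
    (hTF : ∀ k, TF (lp.single 2 k 1) = f k)
    (hTG : ∀ k, TG (lp.single 2 k 1) = g k)
    (hKd1 : K.comp (Kd.comp K) = K) :
    (∀ x ∈ Set.range ⇑K,
        ‖x - ∑' k, (inner ℂ (g k) (Kd x) : ℂ) • f k‖ ≤
          ‖K - TF.comp (adjoint TG)‖ * ‖Kd‖ * ‖x‖) ∧
    (‖Kd‖ = 1 → ‖K - TF.comp (adjoint TG)‖ < 1 →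
      ∀ x ∈ Set.range ⇑K, x ≠ 0 → ‖x - TF ((adjoint TG) (Kd x))‖ < ‖x‖) := by
  have hbound : ∀ x ∈ Set.range ⇑K,
      ‖x - TF (adjoint TG (Kd x))‖ ≤ ‖K - TF.comp (adjoint TG)‖ * ‖Kd‖ * ‖x‖ :=
    fun x hx => norm_sub_apply_le_of_comp_comp_eq hKd1 (TF.comp (adjoint TG)) hx
  refine ⟨fun x hx => ?_, fun hKd hlt x hx hx0 => ?_⟩
  · simpa only [lp_comp_adjoint_apply, hTF, hTG] using hbound x hx
  · calc ‖x - TF (adjoint TG (Kd x))‖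
        ≤ ‖K - TF.comp (adjoint TG)‖ * ‖Kd‖ * ‖x‖ := hbound x hx
      _ < ‖x‖ := by
        rw [hKd, mul_one]
        exact mul_lt_of_lt_one_left (norm_pos_iff.mpr hx0) hlt

/-- for `K` with closed range and Moore–Penrose pseudo-inverse `K†`, and
Bessel sequences `(f k)`, `(g k)` with synthesis operators `T_F`, `T_G`, one has
`‖x − ∑ₖ ⟨g k, K† x⟩ • f k‖ ≤ ‖K − T_F T_G*‖ ‖K†‖ ‖x‖` for `x ∈ R(K)`; in particular if
`‖K†‖ = 1` and `(g k)` is an approximate `K`-dual of `(f k)` then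
`‖x − T_F T_G* K† x‖ < ‖x‖` for every nonzero `x ∈ R(K)`. -/
theorem approximate_K_dual_estimate
    {H : Type*} [NormedAddCommGroup H] [InnerProductSpace ℂ H]
    [CompleteSpace H] [TopologicalSpace.SeparableSpace H]
    {I : Type*} [Countable I] [DecidableEq I]
    (K Kd : H →L[ℂ] H) (f g : I → H)
    (TF TG : lp (fun _ : I => ℂ) 2 →L[ℂ] H)
    (hTF : ∀ k, TF (lp.single 2 k 1) = f k)
    (hTG : ∀ k, TG (lp.single 2 k 1) = g k)
    (hK : IsClosed (Set.range ⇑K))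
    (hKd1 : K.comp (Kd.comp K) = K)
    (hKd2 : Kd.comp (K.comp Kd) = Kd)
    (hKd3 : adjoint (K.comp Kd) = K.comp Kd)
    (hKd4 : adjoint (Kd.comp K) = Kd.comp K)
    (hf : ∃ B : ℝ, 0 < B ∧ ∀ x : H, Summable (fun k => ‖(inner ℂ (f k) x : ℂ)‖ ^ 2) ∧
      ∑' k, ‖(inner ℂ (f k) x : ℂ)‖ ^ 2 ≤ B * ‖x‖ ^ 2)
    (hg : ∃ D : ℝ, 0 < D ∧ ∀ x : H, Summable (fun k => ‖(inner ℂ (g k) x : ℂ)‖ ^ 2) ∧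
      ∑' k, ‖(inner ℂ (g k) x : ℂ)‖ ^ 2 ≤ D * ‖x‖ ^ 2) :
    (∀ x ∈ Set.range ⇑K,
        ‖x - ∑' k, (inner ℂ (g k) (Kd x) : ℂ) • f k‖ ≤
          ‖K - TF.comp (adjoint TG)‖ * ‖Kd‖ * ‖x‖) ∧
    (‖Kd‖ = 1 → ‖K - TF.comp (adjoint TG)‖ < 1 →
      ∀ x ∈ Set.range ⇑K, x ≠ 0 → ‖x - TF ((adjoint TG) (Kd x))‖ < ‖x‖) :=
  approximate_K_dual_estimate_general K Kd f g TF TG hTF hTG hKd1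
end

section
/- Let H be a complex separable Hilbert space, K a bounded linear operator on H with closed range R(K), and P the orthogonal projection of H onto R(K). Let (f_k)_{k∈I} and (g_k)_{k∈I} be Bessel sequences in H with synthesis operators T_F and T_G. If K = P T_F T_G* (i.e. (g_k) is a K-dual of (P f_k)) and ‖T_F T_G*‖ < 1, then ‖K − T_F T_G*‖ < 1, i.e. (g_k) is an approximate K-dual of (f_k). -/
open ContinuousLinearMap

/-- Theorem 4.4: if `(g k)` is a `K`-dual of `(P f_k)` (equivalently
`K = P T_F T_G*`) and `‖T_F T_G*‖ < 1`, then `‖K − T_F T_G*‖ < 1`, i.e. `(g k)` is an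
approximate `K`-dual of `(f k)`. -/
theorem K_dual_of_projected_is_approximate_dual
    {H : Type*} [NormedAddCommGroup H] [InnerProductSpace ℂ H]
    [CompleteSpace H] [TopologicalSpace.SeparableSpace H]
    {I : Type*} [Countable I] [DecidableEq I]
    (K P : H →L[ℂ] H) (f g : I → H)
    (TF TG : lp (fun _ : I => ℂ) 2 →L[ℂ] H)
    (hTF : ∀ k, TF (lp.single 2 k 1) = f k)
    (hTG : ∀ k, TG (lp.single 2 k 1) = g k)
    (hK : IsClosed (Set.range ⇑K))
    (hPmem : ∀ x : H, P x ∈ Set.range ⇑K)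
    (hPfix : ∀ y ∈ Set.range ⇑K, P y = y)
    (hPsa : adjoint P = P)
    (hf : ∃ B : ℝ, 0 < B ∧ ∀ x : H, Summable (fun k => ‖(inner ℂ (f k) x : ℂ)‖ ^ 2) ∧
      ∑' k, ‖(inner ℂ (f k) x : ℂ)‖ ^ 2 ≤ B * ‖x‖ ^ 2)
    (hg : ∃ D : ℝ, 0 < D ∧ ∀ x : H, Summable (fun k => ‖(inner ℂ (g k) x : ℂ)‖ ^ 2) ∧
      ∑' k, ‖(inner ℂ (g k) x : ℂ)‖ ^ 2 ≤ D * ‖x‖ ^ 2)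
    (hdual : K = P.comp (TF.comp (adjoint TG)))
    (hnorm : ‖TF.comp (adjoint TG)‖ < 1) :
    ‖K - TF.comp (adjoint TG)‖ < 1 := by
  set T := TF.comp (adjoint TG) with hT
  -- key: for any y, ‖P y - y‖ ≤ ‖y‖
  have key : ∀ y : H, ‖P y - y‖ ≤ ‖y‖ := by
    intro y
    have hidem : P (P y) = P y := hPfix _ (hPmem y)
    have hinner : (inner ℂ (P y) (P y) : ℂ) = inner ℂ y (P y) := by
      calc (inner ℂ (P y) (P y) : ℂ) = inner ℂ y (adjoint P (P y)) := by
            rw [ContinuousLinearMap.adjoint_inner_right]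
        _ = inner ℂ y (P y) := by rw [hPsa, hidem]
    have hsq : ‖P y - y‖ ^ 2 = ‖y‖ ^ 2 - ‖P y‖ ^ 2 := by
      have := @norm_sub_sq ℂ H _ _ _ (P y) y
      have hre : RCLike.re (inner ℂ (P y) y : ℂ) = ‖P y‖ ^ 2 := by
        have h2 : (inner ℂ (P y) y : ℂ) = starRingEnd ℂ (inner ℂ y (P y) : ℂ) :=
          (inner_conj_symm _ _).symm
        rw [h2, ← hinner]
        simp [inner_self_eq_norm_sq, ← Complex.ofReal_pow]
      rw [hre] at this
      linarith [this]
    nlinarith [norm_nonneg (P y - y), norm_nonneg y, norm_nonneg (P y), sq_nonneg (‖P y‖)]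
  have hle : ‖K - T‖ ≤ ‖T‖ := by
    apply ContinuousLinearMap.opNorm_le_bound _ (norm_nonneg T)
    intro x
    have : (K - T) x = P (T x) - T x := by
      simp [hdual, ContinuousLinearMap.sub_apply]
    rw [this]
    calc ‖P (T x) - T x‖ ≤ ‖T x‖ := key _
      _ ≤ ‖T‖ * ‖x‖ := T.le_opNorm x
  linarith
end

section
/- Let H be a complex separable Hilbert space, K a bounded linear operator on H with closed range R(K), and P the orthogonal projection of H onto R(K). Let (f_k)_{k∈I} and (g_k)_{k∈I} be Bessel sequences in H with synthesis operators T_F and T_G. If ‖K − P T_F T_G*‖ < 1 (i.e. (g_k) is an approximate K-dual of (P f_k)) and ‖(I − P) T_F T_G*‖ < 1 − ‖K − P T_F T_G*‖, then ‖K − T_F T_G*‖ < 1, i.e. (g_k) is an approximate K-dual of (f_k). -/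
open ContinuousLinearMap

theorem ContinuousLinearMap.norm_sub_le_norm_sub_comp_add_norm_id_sub_comp
    {𝕜 E F : Type*} [NontriviallyNormedField 𝕜] [SeminormedAddCommGroup E]
    [SeminormedAddCommGroup F] [NormedSpace 𝕜 E] [NormedSpace 𝕜 F]
    (K T : E →L[𝕜] F) (P : F →L[𝕜] F) :
    ‖K - T‖ ≤ ‖K - P.comp T‖ + ‖(ContinuousLinearMap.id 𝕜 F - P).comp T‖ := by
  have hsplit : K - T = (K - P.comp T) - (ContinuousLinearMap.id 𝕜 F - P).comp T := by
    rw [sub_comp, id_comp]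
    abel
  rw [hsplit]
  exact norm_sub_le _ _

theorem approximate_K_dual_of_projected_is_approximate_dual_general
    {H : Type*} [NormedAddCommGroup H] [InnerProductSpace ℂ H]
    [CompleteSpace H]
    {I : Type*}
    (K P : H →L[ℂ] H)
    (TF TG : lp (fun _ : I => ℂ) 2 →L[ℂ] H)
    (hcompl : ‖(ContinuousLinearMap.id ℂ H - P).comp (TF.comp (adjoint TG))‖ <
      1 - ‖K - P.comp (TF.comp (adjoint TG))‖) :
    ‖K - TF.comp (adjoint TG)‖ < 1 := by
  have := norm_sub_le_norm_sub_comp_add_norm_id_sub_comp K (TF.comp (adjoint TG)) P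
  linarith

/-- Theorem 4.5: if `(g k)` is an approximate `K`-dual of `(P f_k)`
(`‖K − P T_F T_G*‖ < 1`) and `‖(I − P) T_F T_G*‖ < 1 − ‖K − P T_F T_G*‖`, then
`‖K − T_F T_G*‖ < 1`, i.e. `(g k)` is an approximate `K`-dual of `(f k)`. -/
theorem approximate_K_dual_of_projected_is_approximate_dual
    {H : Type*} [NormedAddCommGroup H] [InnerProductSpace ℂ H]
    [CompleteSpace H] [TopologicalSpace.SeparableSpace H]
    {I : Type*} [Countable I] [DecidableEq I]
    (K P : H →L[ℂ] H) (f g : I → H)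
    (TF TG : lp (fun _ : I => ℂ) 2 →L[ℂ] H)
    (hTF : ∀ k, TF (lp.single 2 k 1) = f k)
    (hTG : ∀ k, TG (lp.single 2 k 1) = g k)
    (hK : IsClosed (Set.range ⇑K))
    (hPmem : ∀ x : H, P x ∈ Set.range ⇑K)
    (hPfix : ∀ y ∈ Set.range ⇑K, P y = y)
    (hPsa : adjoint P = P)
    (hf : ∃ B : ℝ, 0 < B ∧ ∀ x : H, Summable (fun k => ‖(inner ℂ (f k) x : ℂ)‖ ^ 2) ∧
      ∑' k, ‖(inner ℂ (f k) x : ℂ)‖ ^ 2 ≤ B * ‖x‖ ^ 2)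
    (hg : ∃ D : ℝ, 0 < D ∧ ∀ x : H, Summable (fun k => ‖(inner ℂ (g k) x : ℂ)‖ ^ 2) ∧
      ∑' k, ‖(inner ℂ (g k) x : ℂ)‖ ^ 2 ≤ D * ‖x‖ ^ 2)
    (happrox : ‖K - P.comp (TF.comp (adjoint TG))‖ < 1)
    (hcompl : ‖(ContinuousLinearMap.id ℂ H - P).comp (TF.comp (adjoint TG))‖ <
      1 - ‖K - P.comp (TF.comp (adjoint TG))‖) :
    ‖K - TF.comp (adjoint TG)‖ < 1 :=
  approximate_K_dual_of_projected_is_approximate_dual_general K P TF TG hcompl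
end
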